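/- arXiv:1909.07291 — 2 statements merged into one kernel-verified Lean document; each statement's English description precedes it below -/
import Mathlib

section
/- Let u, A, η : ℝ × ℝ³ → ℝ³ be C¹ fields and α : ℝ × ℝ³ → ℝ a scalar field, with |A| > 0 and η·A = 0 everywhere. Suppose A satisfies the advected-gauge Faraday equation ∂A/∂t − u×(∇×A) + ∇(u·A) = 0 and η satisfies ∂η/∂t − u×(∇×η) + ∇(u·η) = α A. Then α = 2 (A·σ·η)/|A|², where σ is the shear tensor of u. -/
noncomputable section

/-- Vectors in ℝ³. -/
abbrev V3 := Fin 3 → ℝ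

/-- Euclidean dot product on ℝ³. -/
def dot3 (a b : V3) : ℝ := a 0 * b 0 + a 1 * b 1 + a 2 * b 2

/-- Cross product on ℝ³. -/
def cross3 (a b : V3) : V3 :=
  ![a 1 * b 2 - a 2 * b 1, a 2 * b 0 - a 0 * b 2, a 0 * b 1 - a 1 * b 0]

/-- Euclidean norm on ℝ³. -/
def norm3 (a : V3) : ℝ := Real.sqrt (dot3 a a)

/-- Spatial partial derivative of a time-dependent scalar field. -/
def pdS (i : Fin 3) (f : ℝ × V3 → ℝ) (p : ℝ × V3) : ℝ :=
  fderiv ℝ (fun x => f (p.1, x)) p.2 (Pi.single i 1)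

/-- Spatial gradient of a time-dependent scalar field. -/
def gradS (f : ℝ × V3 → ℝ) (p : ℝ × V3) : V3 := fun i => pdS i f p

/-- Spatial divergence of a time-dependent vector field. -/
def divS (F : ℝ × V3 → V3) (p : ℝ × V3) : ℝ :=
  pdS 0 (fun q => F q 0) p + pdS 1 (fun q => F q 1) p + pdS 2 (fun q => F q 2) p

/-- Spatial curl of a time-dependent vector field. -/
def curlS (F : ℝ × V3 → V3) (p : ℝ × V3) : V3 :=
  ![pdS 1 (fun q => F q 2) p - pdS 2 (fun q => F q 1) p,
    pdS 2 (fun q => F q 0) p - pdS 0 (fun q => F q 2) p,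
    pdS 0 (fun q => F q 1) p - pdS 1 (fun q => F q 0) p]

/-- Time partial derivative of a scalar field. -/
def dtS (f : ℝ × V3 → ℝ) (p : ℝ × V3) : ℝ := deriv (fun t => f (t, p.2)) p.1

/-- Time partial derivative of a vector field. -/
def dtV (F : ℝ × V3 → V3) (p : ℝ × V3) : V3 := deriv (fun t => F (t, p.2)) p.1

/-- Fluid shear tensor `σ_ij = ½(∂u_i/∂x_j + ∂u_j/∂x_i) − (1/3) δ_ij ∇·u`. -/
def shearS (u : ℝ × V3 → V3) (p : ℝ × V3) : Fin 3 → Fin 3 → ℝ :=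
  fun i j => (1 / 2) * (pdS j (fun q => u q i) p + pdS i (fun q => u q j) p)
    - (1 / 3) * (if i = j then (1 : ℝ) else 0) * divS u p

/-- Matrix–vector product `(m·v)_i = Σ_j m_ij v_j`. -/
def matVec (m : Fin 3 → Fin 3 → ℝ) (v : V3) : V3 := fun i => ∑ j : Fin 3, m i j * v j

/-- Quadratic form `a·m·b = Σ_{i,j} a_i m_ij b_j`. -/
def quad3 (a : V3) (m : Fin 3 → Fin 3 → ℝ) (b : V3) : ℝ :=
  ∑ i : Fin 3, ∑ j : Fin 3, a i * m i j * b j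

/-- Directional derivative `(v·∇)F` in the spatial variables. -/
def dirDS (v : V3) (F : ℝ × V3 → V3) (p : ℝ × V3) : V3 :=
  fun i => v 0 * pdS 0 (fun q => F q i) p + v 1 * pdS 1 (fun q => F q i) p
    + v 2 * pdS 2 (fun q => F q i) p

/-!
Pair the equation for `η` with `A` and the Faraday equation with `η` and add. In coordinates the
Lie-dragging operator is `∂ₜF_i + u_j ∂_j F_i + F_j ∂_i u_j`, so the sum is the advective
derivative `(∂ₜ + u·∇)(A·η)` plus `A_i η_j (∂_i u_j + ∂_j u_i) = 2 A·σ·η + ⅔ (∇·u) A·η`.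
Since `A·η ≡ 0`, what remains is `α |A|² = 2 A·σ·η`.
-/

variable {u F G : ℝ × V3 → V3} {p : ℝ × V3}

theorem differentiableAt_spaceSlice (h : DifferentiableAt ℝ F p) (j : Fin 3) :
    DifferentiableAt ℝ (fun x => F (p.1, x) j) p.2 := by
  have h' : DifferentiableAt ℝ F (p.1, p.2) := h
  fun_prop

theorem differentiableAt_timeSlice (h : DifferentiableAt ℝ F p) (j : Fin 3) :
    DifferentiableAt ℝ (fun t => F (t, p.2) j) p.1 := by
  have h' : DifferentiableAt ℝ F (p.1, p.2) := h
  fun_prop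

theorem dot3_comm (a b : V3) : dot3 a b = dot3 b a := by
  simp only [dot3]; ring

theorem dot3_add_left (a b c : V3) : dot3 (a + b) c = dot3 a c + dot3 b c := by
  simp only [dot3, Pi.add_apply]; ring

theorem dot3_add_right (a b c : V3) : dot3 a (b + c) = dot3 a b + dot3 a c := by
  simp only [dot3, Pi.add_apply]; ring

theorem pdS_dot3 (hF : DifferentiableAt ℝ F p) (hG : DifferentiableAt ℝ G p) (i : Fin 3) :
    pdS i (fun q => dot3 (F q) (G q)) p =
      dot3 (fun j => pdS i (fun q => F q j) p) (G p)
        + dot3 (F p) (fun j => pdS i (fun q => G q j) p) := by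
  have hF' := differentiableAt_spaceSlice hF
  have hG' := differentiableAt_spaceSlice hG
  simp only [pdS, dot3]
  rw [fderiv_fun_add (by fun_prop) (by fun_prop), fderiv_fun_add (by fun_prop) (by fun_prop),
    fderiv_fun_mul (hF' 0) (hG' 0), fderiv_fun_mul (hF' 1) (hG' 1), fderiv_fun_mul (hF' 2) (hG' 2)]
  simp only [add_apply, smul_apply, smul_eq_mul]
  ring

theorem dtS_dot3 (hF : DifferentiableAt ℝ F p) (hG : DifferentiableAt ℝ G p) :
    dtS (fun q => dot3 (F q) (G q)) p = dot3 (dtV F p) (G p) + dot3 (F p) (dtV G p) := by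
  have hF' := differentiableAt_timeSlice hF
  have hG' := differentiableAt_timeSlice hG
  simp only [dtS, dtV, dot3, deriv_pi hF', deriv_pi hG']
  rw [deriv_fun_add (by fun_prop) (by fun_prop), deriv_fun_add (by fun_prop) (by fun_prop),
    deriv_fun_mul (hF' 0) (hG' 0), deriv_fun_mul (hF' 1) (hG' 1), deriv_fun_mul (hF' 2) (hG' 2)]
  ring

/-- By Cartan's formula, `(∂ₜ + L_u)(F · dx) = lieDrag u F · dx`. -/
def lieDrag (u F : ℝ × V3 → V3) (p : ℝ × V3) : V3 :=
  dtV F p - cross3 (u p) (curlS F p) + gradS (fun q => dot3 (u q) (F q)) p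

/-- Note the index order: `(∇u)_ij = ∂u_j/∂x_i`. -/
def gradV (u : ℝ × V3 → V3) (p : ℝ × V3) : Fin 3 → Fin 3 → ℝ :=
  fun i j => pdS i (fun q => u q j) p

theorem lieDrag_eq (hu : DifferentiableAt ℝ u p) (hF : DifferentiableAt ℝ F p) :
    lieDrag u F p = dtV F p + dirDS (u p) F p + matVec (gradV u p) (F p) := by
  funext i
  simp only [lieDrag, Pi.add_apply, Pi.sub_apply, gradS, pdS_dot3 hu hF]
  fin_cases i <;>
    simp only [Fin.zero_eta, Fin.mk_one, Fin.reduceFinMk, Fin.isValue, cross3, curlS,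
      Matrix.cons_val, Matrix.cons_val_one, Matrix.cons_val_zero, dot3, dirDS, matVec, gradV,
      Fin.sum_univ_three] <;>
    ring

theorem dot3_matVec_gradV_add (u : ℝ × V3 → V3) (p : ℝ × V3) (a b : V3) :
    dot3 (matVec (gradV u p) a) b + dot3 a (matVec (gradV u p) b) =
      2 * quad3 a (shearS u p) b + 2 / 3 * divS u p * dot3 a b := by
  simp only [dot3, matVec, gradV, quad3, shearS, divS, Fin.sum_univ_three]
  norm_num [Fin.ext_iff]
  ring

theorem dot3_dirDS_add (hF : DifferentiableAt ℝ F p) (hG : DifferentiableAt ℝ G p) :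
    dot3 (dirDS (u p) F p) (G p) + dot3 (F p) (dirDS (u p) G p) =
      dot3 (u p) (gradS (fun q => dot3 (F q) (G q)) p) := by
  unfold gradS
  simp only [pdS_dot3 hF hG]
  simp only [dirDS, dot3]
  ring

theorem dot3_lieDrag_add_dot3_lieDrag (hu : DifferentiableAt ℝ u p)
    (hF : DifferentiableAt ℝ F p) (hG : DifferentiableAt ℝ G p) :
    dot3 (lieDrag u F p) (G p) + dot3 (F p) (lieDrag u G p) =
      dtS (fun q => dot3 (F q) (G q)) p + dot3 (u p) (gradS (fun q => dot3 (F q) (G q)) p)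
        + 2 * quad3 (F p) (shearS u p) (G p) + 2 / 3 * divS u p * dot3 (F p) (G p) := by
  rw [lieDrag_eq hu hF, lieDrag_eq hu hG, dtS_dot3 hF hG, ← dot3_dirDS_add hF hG]
  simp only [dot3_add_left, dot3_add_right]
  linear_combination dot3_matVec_gradV_add u p (F p) (G p)

theorem dtS_eq_zero_of_forall {f : ℝ × V3 → ℝ} (hf : ∀ q, f q = 0) : dtS f p = 0 := by
  simp [dtS, hf]

theorem gradS_eq_zero_of_forall {f : ℝ × V3 → ℝ} (hf : ∀ q, f q = 0) : gradS f p = 0 := by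
  funext i
  simp [gradS, pdS, hf]

theorem norm3_sq (a : V3) : norm3 a ^ 2 = dot3 a a :=
  Real.sq_sqrt (add_nonneg (add_nonneg (mul_self_nonneg _) (mul_self_nonneg _)) (mul_self_nonneg _))

/-- the coefficient `α` in the Lie-dragging equation for the
Godbillon–Vey one-form is `α = 2(A·σ·η)/|A|²`. -/
theorem godbillon_vey_alpha_formula
    (u A η : ℝ × V3 → V3) (α : ℝ × V3 → ℝ)
    (hu : ContDiff ℝ 1 u) (hA : ContDiff ℝ 1 A) (hη : ContDiff ℝ 1 η)
    (hpos : ∀ p, 0 < norm3 (A p))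
    (horth : ∀ p, dot3 (η p) (A p) = 0)
    (hFaraday : ∀ p, dtV A p - cross3 (u p) (curlS A p)
        + gradS (fun q => dot3 (u q) (A q)) p = 0)
    (hηeq : ∀ p, dtV η p - cross3 (u p) (curlS η p)
        + gradS (fun q => dot3 (u q) (η q)) p = α p • A p) :
    ∀ p : ℝ × V3, α p = 2 * quad3 (A p) (shearS u p) (η p) / norm3 (A p) ^ 2 := by
  intro p
  have hAη : ∀ q, dot3 (A q) (η q) = 0 := fun q => (dot3_comm _ _).trans (horth q)
  have key := dot3_lieDrag_add_dot3_lieDrag (p := p) (hu.differentiable one_ne_zero p)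
    (hA.differentiable one_ne_zero p) (hη.differentiable one_ne_zero p)
  rw [show lieDrag u A p = 0 from hFaraday p, show lieDrag u η p = α p • A p from hηeq p,
    dtS_eq_zero_of_forall hAη, gradS_eq_zero_of_forall hAη, hAη p] at key
  rw [eq_div_iff (pow_pos (hpos p) 2).ne', norm3_sq]
  simp only [dot3, Pi.zero_apply, Pi.smul_apply, smul_eq_mul] at key ⊢
  linarith
end
end

section
/- Let A : ℝ³ → ℝ³ be a C² vector field with |A| > 0 everywhere, B = ∇×A, and A·B = 0 everywhere. Write A = |A| for the norm, Â = A/A, η = (A×B)/A², η̂ = Â×(∇×Â), λ = (A·∇A)/A³ (where ∇A is the gradient of the scalar |A|). Then η̂·(∇×η̂) = η·(∇×η) + ∇·R, where R = ((B·∇A)/A³) A − 2λ B + λ (∇ln A) × A. Hence the Reinhart–Wood Godbillon–Vey helicity density η̂·(∇×η̂) differs from η·(∇×η) by a pure divergence. -/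
/-!
Write `N = |A|`, `ℓ = log N` and `u = η + λA`. Expanding `∇×(N⁻¹A)` shows `η̂ = u - ∇ℓ`, and
subtracting a gradient changes a helicity density only by a divergence:
`(u - ∇ℓ)·∇×(u - ∇ℓ) = u·∇×u + ∇·(∇ℓ × u)`. Since `A·B = 0`, the field `η` satisfies
`η × A = B`; hence `A·∇×η = ∇·B + η·B = 0` and `η·(∇λ × A) = -∇λ·B`, which give
`u·∇×u = η·∇×η - ∇·(λB)`. Finally `R = ∇ℓ × u - λB`.
-/

noncomputable section

/-- Partial derivative of a scalar field in the `i`-th Cartesian direction. -/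
def pd (i : Fin 3) (f : V3 → ℝ) (x : V3) : ℝ := fderiv ℝ f x (Pi.single i 1)

/-- Gradient of a scalar field. -/
def grad3 (f : V3 → ℝ) (x : V3) : V3 := fun i => pd i f x

/-- Divergence of a vector field. -/
def div3 (F : V3 → V3) (x : V3) : ℝ :=
  pd 0 (fun y => F y 0) x + pd 1 (fun y => F y 1) x + pd 2 (fun y => F y 2) x

/-- Curl of a vector field. -/
def curl3 (F : V3 → V3) (x : V3) : V3 :=
  ![pd 1 (fun y => F y 2) x - pd 2 (fun y => F y 1) x,
    pd 2 (fun y => F y 0) x - pd 0 (fun y => F y 2) x,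
    pd 0 (fun y => F y 1) x - pd 1 (fun y => F y 0) x]

/-- Directional derivative `(v·∇)F` of a vector field. -/
def dirD3 (v : V3) (F : V3 → V3) (x : V3) : V3 :=
  fun i => v 0 * pd 0 (fun y => F y i) x + v 1 * pd 1 (fun y => F y i) x
    + v 2 * pd 2 (fun y => F y i) x

open Matrix

lemma dot3_eq_dotProduct (a b : V3) : dot3 a b = a ⬝ᵥ b := (vec3_dotProduct a b).symm

lemma cross3_eq_crossProduct (a b : V3) : cross3 a b = a ⨯₃ b := rfl

lemma sq_norm3 (a : V3) : norm3 a ^ 2 = a ⬝ᵥ a := by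
  rw [norm3, Real.sq_sqrt, dot3_eq_dotProduct]
  exact add_nonneg (add_nonneg (mul_self_nonneg _) (mul_self_nonneg _)) (mul_self_nonneg _)

section PartialDerivative

variable {f g : V3 → ℝ} {x : V3} {i : Fin 3}

lemma pd_add (hf : DifferentiableAt ℝ f x) (hg : DifferentiableAt ℝ g x) :
    pd i (fun y => f y + g y) x = pd i f x + pd i g x := by
  simp [pd, fderiv_fun_add hf hg]

lemma pd_sub (hf : DifferentiableAt ℝ f x) (hg : DifferentiableAt ℝ g x) :
    pd i (fun y => f y - g y) x = pd i f x - pd i g x := by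
  simp [pd, fderiv_fun_sub hf hg]

lemma pd_mul (hf : DifferentiableAt ℝ f x) (hg : DifferentiableAt ℝ g x) :
    pd i (fun y => f y * g y) x = pd i f x * g x + f x * pd i g x := by
  simp [pd, fderiv_fun_mul hf hg]
  ring

lemma pd_comp_of_hasDerivAt {φ : ℝ → ℝ} {φ' : ℝ} (hφ : HasDerivAt φ φ' (f x))
    (hf : DifferentiableAt ℝ f x) : pd i (fun y => φ (f y)) x = φ' * pd i f x := by
  rw [pd, show (fun y => φ (f y)) = φ ∘ f from rfl,
    (hφ.comp_hasFDerivAt x hf.hasFDerivAt).fderiv]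
  rfl

lemma differentiableAt_pd (hf : ContDiffAt ℝ 2 f x) : DifferentiableAt ℝ (pd i f) x :=
  ((hf.fderiv_right (m := 1) le_rfl).differentiableAt one_ne_zero).clm_apply
    (differentiableAt_const _)

lemma pd_pd_comm (hf : ContDiffAt ℝ 2 f x) (i j : Fin 3) :
    pd i (pd j f) x = pd j (pd i f) x := by
  have hd : DifferentiableAt ℝ (fderiv ℝ f) x :=
    (hf.fderiv_right (m := 1) le_rfl).differentiableAt one_ne_zero
  have key : ∀ v w : V3, fderiv ℝ (fun y => fderiv ℝ f y v) x w = fderiv ℝ (fderiv ℝ f) x w v := by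
    intro v w
    rw [fderiv_clm_apply hd (differentiableAt_const v)]
    simp
  change fderiv ℝ (fun y => fderiv ℝ f y _) x _ = fderiv ℝ (fun y => fderiv ℝ f y _) x _
  rw [key, key, (hf.isSymmSndFDerivAt (by simp)).eq]

end PartialDerivative

section VectorCalculus

variable {f : V3 → ℝ} {F G : V3 → V3} {x : V3}

lemma differentiableAt_grad3 (hf : ContDiffAt ℝ 2 f x) : DifferentiableAt ℝ (grad3 f) x :=
  differentiableAt_pi.2 fun _ => differentiableAt_pd hf

lemma differentiableAt_curl3 (hF : ContDiffAt ℝ 2 F x) : DifferentiableAt ℝ (curl3 F) x := by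
  have h (i j : Fin 3) : DifferentiableAt ℝ (pd i fun y => F y j) x :=
    differentiableAt_pd (contDiffAt_pi.1 hF j)
  rw [differentiableAt_pi]
  intro k
  fin_cases k <;>
    simp only [curl3, Fin.zero_eta, Fin.mk_one, Fin.reduceFinMk, Fin.isValue, cons_val] <;>
    exact (h _ _).sub (h _ _)

lemma grad3_comp_of_hasDerivAt {φ : ℝ → ℝ} {φ' : ℝ} (hφ : HasDerivAt φ φ' (f x))
    (hf : DifferentiableAt ℝ f x) : grad3 (fun y => φ (f y)) x = φ' • grad3 f x :=
  funext fun _ => pd_comp_of_hasDerivAt hφ hf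

lemma grad3_inv (hf : DifferentiableAt ℝ f x) (hf0 : f x ≠ 0) :
    grad3 (fun y => (f y)⁻¹) x = -(f x ^ 2)⁻¹ • grad3 f x :=
  grad3_comp_of_hasDerivAt (hasDerivAt_inv hf0) hf

lemma grad3_log (hf : DifferentiableAt ℝ f x) (hf0 : f x ≠ 0) :
    grad3 (fun y => Real.log (f y)) x = (f x)⁻¹ • grad3 f x :=
  grad3_comp_of_hasDerivAt (Real.hasDerivAt_log hf0) hf

lemma curl3_add (hF : DifferentiableAt ℝ F x) (hG : DifferentiableAt ℝ G x) :
    curl3 (fun y => F y + G y) x = curl3 F x + curl3 G x := by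
  have hF' := differentiableAt_pi.1 hF
  have hG' := differentiableAt_pi.1 hG
  ext k
  fin_cases k <;>
    simp only [curl3, Pi.add_apply, pd_add (hF' _) (hG' _), Fin.zero_eta, Fin.mk_one,
      Fin.reduceFinMk, Fin.isValue, cons_val] <;>
    ring

lemma curl3_sub (hF : DifferentiableAt ℝ F x) (hG : DifferentiableAt ℝ G x) :
    curl3 (fun y => F y - G y) x = curl3 F x - curl3 G x := by
  have hF' := differentiableAt_pi.1 hF
  have hG' := differentiableAt_pi.1 hG
  ext k
  fin_cases k <;>
    simp only [curl3, Pi.sub_apply, pd_sub (hF' _) (hG' _), Fin.zero_eta, Fin.mk_one,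
      Fin.reduceFinMk, Fin.isValue, cons_val] <;>
    ring

lemma curl3_smul (hf : DifferentiableAt ℝ f x) (hF : DifferentiableAt ℝ F x) :
    curl3 (fun y => f y • F y) x = grad3 f x ⨯₃ F x + f x • curl3 F x := by
  have hF' := differentiableAt_pi.1 hF
  ext k
  fin_cases k <;>
    simp only [curl3, grad3, cross_apply, Pi.add_apply, Pi.smul_apply, smul_eq_mul,
      pd_mul hf (hF' _), Fin.zero_eta, Fin.mk_one, Fin.reduceFinMk, Fin.isValue, cons_val] <;> ring

lemma curl3_grad3 (hf : ContDiffAt ℝ 2 f x) : curl3 (grad3 f) x = 0 := by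
  ext k
  fin_cases k <;>
    simp only [curl3, grad3, pd_pd_comm hf, sub_self, Pi.zero_apply, Fin.zero_eta, Fin.mk_one,
      Fin.reduceFinMk, Fin.isValue, cons_val]

lemma div3_sub (hF : DifferentiableAt ℝ F x) (hG : DifferentiableAt ℝ G x) :
    div3 (fun y => F y - G y) x = div3 F x - div3 G x := by
  have hF' := differentiableAt_pi.1 hF
  have hG' := differentiableAt_pi.1 hG
  simp only [div3, Pi.sub_apply, pd_sub (hF' _) (hG' _)]
  ring

lemma div3_smul (hf : DifferentiableAt ℝ f x) (hF : DifferentiableAt ℝ F x) :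
    div3 (fun y => f y • F y) x = grad3 f x ⬝ᵥ F x + f x * div3 F x := by
  have hF' := differentiableAt_pi.1 hF
  simp only [div3, grad3, vec3_dotProduct, Pi.smul_apply, smul_eq_mul, pd_mul hf (hF' _)]
  ring

lemma div3_crossProduct (hF : DifferentiableAt ℝ F x) (hG : DifferentiableAt ℝ G x) :
    div3 (fun y => F y ⨯₃ G y) x = G x ⬝ᵥ curl3 F x - F x ⬝ᵥ curl3 G x := by
  have hF' := differentiableAt_pi.1 hF
  have hG' := differentiableAt_pi.1 hG
  have hFG (i j : Fin 3) : DifferentiableAt ℝ (fun y => F y i * G y j) x := (hF' i).mul (hG' j)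
  rw [vec3_dotProduct, vec3_dotProduct]
  simp only [div3, curl3, cross_apply, pd_sub (hFG _ _) (hFG _ _), pd_mul (hF' _) (hG' _),
    Fin.isValue, cons_val]
  ring

lemma div3_curl3 (hF : ContDiffAt ℝ 2 F x) : div3 (curl3 F) x = 0 := by
  have h (i j : Fin 3) : DifferentiableAt ℝ (pd i fun y => F y j) x :=
    differentiableAt_pd (contDiffAt_pi.1 hF j)
  have hs (i j k : Fin 3) : pd i (pd j fun y => F y k) x = pd j (pd i fun y => F y k) x :=
    pd_pd_comm (contDiffAt_pi.1 hF k) i j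
  simp only [div3, curl3, pd_sub (h _ _) (h _ _), Fin.isValue, cons_val]
  rw [hs 0 1, hs 0 2, hs 1 2]
  ring

lemma curl3_inv_smul (hf : DifferentiableAt ℝ f x) (hf0 : f x ≠ 0)
    (hF : DifferentiableAt ℝ F x) :
    curl3 (fun y => (f y)⁻¹ • F y) x = (f x)⁻¹ • curl3 F x - (f x ^ 2)⁻¹ • grad3 f x ⨯₃ F x := by
  rw [curl3_smul (hf.fun_inv hf0) hF, grad3_inv hf hf0]
  simp only [neg_smul, map_neg, map_smul, LinearMap.neg_apply, LinearMap.smul_apply]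
  abel

end VectorCalculus

section Regularity

variable {F G : V3 → V3} {x : V3}

lemma differentiableAt_crossProduct (hF : DifferentiableAt ℝ F x)
    (hG : DifferentiableAt ℝ G x) : DifferentiableAt ℝ (fun y => F y ⨯₃ G y) x := by
  rw [differentiableAt_pi]
  intro i
  fin_cases i <;>
    simp only [cross_apply, Fin.zero_eta, Fin.mk_one, Fin.reduceFinMk, Fin.isValue, cons_val] <;>
    fun_prop

lemma differentiableAt_dotProduct (hF : DifferentiableAt ℝ F x) (hG : DifferentiableAt ℝ G x) :
    DifferentiableAt ℝ (fun y => F y ⬝ᵥ G y) x := by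
  simp only [vec3_dotProduct]
  fun_prop

lemma contDiffAt_norm3 {n : WithTop ℕ∞} (hF : ContDiffAt ℝ n F x) (hx : norm3 (F x) ≠ 0) :
    ContDiffAt ℝ n (fun y => norm3 (F y)) x := by
  have hdot : ContDiffAt ℝ n (fun y => dot3 (F y) (F y)) x := by
    have := contDiffAt_pi.1 hF
    simp only [dot3]
    fun_prop
  exact hdot.sqrt fun h => hx (by rw [norm3, h, Real.sqrt_zero])

end Regularity

section CrossProductAlgebra

variable {n : ℝ} {a b g : V3}

lemma inv_sq_smul_cross_cross_self (hn : n ≠ 0) (ha : a ⬝ᵥ a = n ^ 2) (hab : a ⬝ᵥ b = 0) :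
    ((n ^ 2)⁻¹ • a ⨯₃ b) ⨯₃ a = b := by
  rw [LinearMap.map_smul₂, cross_cross_eq_smul_sub_smul, dotProduct_comm b, hab, ha, zero_smul,
    sub_zero, smul_smul, inv_mul_cancel₀ (pow_ne_zero 2 hn), one_smul]

lemma inv_smul_cross_sub (hn : n ≠ 0) (ha : a ⬝ᵥ a = n ^ 2) :
    (n⁻¹ • a) ⨯₃ (n⁻¹ • b - (n ^ 2)⁻¹ • g ⨯₃ a)
      = (n ^ 2)⁻¹ • a ⨯₃ b + ((a ⬝ᵥ g) / n ^ 3) • a - n⁻¹ • g := by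
  have h := cross_cross_eq_smul_sub_smul' a g a
  simp only [map_sub, map_smul, LinearMap.smul_apply, h, ha, dotProduct_comm g a]
  match_scalars <;> field_simp

lemma inv_smul_cross_inv_sq_smul_cross :
    (n⁻¹ • g) ⨯₃ ((n ^ 2)⁻¹ • a ⨯₃ b) = ((b ⬝ᵥ g) / n ^ 3) • a - ((a ⬝ᵥ g) / n ^ 3) • b := by
  simp only [map_smul, LinearMap.smul_apply, cross_cross_eq_smul_sub_smul', dotProduct_comm g]
  match_scalars <;> ring

end CrossProductAlgebra

def helicity3 (F : V3 → V3) (x : V3) : ℝ := F x ⬝ᵥ curl3 F x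

section Helicity

variable {x : V3}

lemma helicity3_sub_grad3 {u : V3 → V3} {ℓ : V3 → ℝ} (hu : DifferentiableAt ℝ u x)
    (hℓ : ContDiffAt ℝ 2 ℓ x) :
    helicity3 (fun y => u y - grad3 ℓ y) x
      = helicity3 u x + div3 (fun y => grad3 ℓ y ⨯₃ u y) x := by
  have hgrad := differentiableAt_grad3 hℓ
  rw [helicity3, helicity3, curl3_sub hu hgrad, curl3_grad3 hℓ, sub_zero,
    div3_crossProduct hgrad hu, curl3_grad3 hℓ, dotProduct_zero, sub_dotProduct]
  ring

lemma helicity3_add_smul_of_cross_eq_curl3 {A η : V3 → V3} {lam : V3 → ℝ}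
    (hA : ContDiffAt ℝ 2 A x) (hη : DifferentiableAt ℝ η x) (hlam : DifferentiableAt ℝ lam x)
    (hηA : ∀ y, η y ⨯₃ A y = curl3 A y) :
    helicity3 (fun y => η y + lam y • A y) x
      = helicity3 η x - div3 (fun y => lam y • curl3 A y) x := by
  have hA' := hA.differentiableAt (by norm_num)
  have hA_curlη : A x ⬝ᵥ curl3 η x = 0 := by
    have h := div3_crossProduct hη hA'
    rw [show (fun y => η y ⨯₃ A y) = curl3 A from funext hηA, div3_curl3 hA, ← hηA x,
      dot_self_cross, sub_zero] at h
    exact h.symm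
  rw [helicity3, helicity3, curl3_add hη (hlam.fun_smul hA'), curl3_smul hlam hA',
    div3_smul hlam (differentiableAt_curl3 hA), div3_curl3 hA, ← hηA x]
  simp only [add_dotProduct, dotProduct_add, smul_dotProduct, dotProduct_smul, smul_eq_mul,
    hA_curlη, dot_self_cross, dot_cross_self, triple_product_permutation (η x) (grad3 lam x)]
  rw [← cross_anticomm, dotProduct_neg]
  ring

end Helicity

def godbillonVeyField (A : V3 → V3) (x : V3) : V3 := (norm3 (A x) ^ 2)⁻¹ • A x ⨯₃ curl3 A x

def gvLambda (A : V3 → V3) (x : V3) : ℝ :=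
  A x ⬝ᵥ grad3 (fun y => norm3 (A y)) x / norm3 (A x) ^ 3

section GodbillonVeyField

variable {A : V3 → V3} {x : V3}

lemma godbillonVeyField_cross_self (h0 : norm3 (A x) ≠ 0) (hAB : A x ⬝ᵥ curl3 A x = 0) :
    godbillonVeyField A x ⨯₃ A x = curl3 A x :=
  inv_sq_smul_cross_cross_self h0 (sq_norm3 _).symm hAB

lemma differentiableAt_godbillonVeyField (hA : ContDiffAt ℝ 2 A x) (h0 : norm3 (A x) ≠ 0) :
    DifferentiableAt ℝ (godbillonVeyField A) x := by
  have hN := (contDiffAt_norm3 hA h0).differentiableAt (by norm_num)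
  have hcross := differentiableAt_crossProduct (hA.differentiableAt (by norm_num))
    (differentiableAt_curl3 hA)
  unfold godbillonVeyField
  fun_prop (disch := exact pow_ne_zero 2 h0)

lemma differentiableAt_gvLambda (hA : ContDiffAt ℝ 2 A x) (h0 : norm3 (A x) ≠ 0) :
    DifferentiableAt ℝ (gvLambda A) x := by
  have hN := contDiffAt_norm3 hA h0
  have hN' := hN.differentiableAt (by norm_num)
  have hdot := differentiableAt_dotProduct (hA.differentiableAt (by norm_num))
    (differentiableAt_grad3 hN)
  unfold gvLambda
  fun_prop (disch := exact pow_ne_zero 3 h0)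

lemma inv_norm3_smul_cross_curl3 (hA : DifferentiableAt ℝ A x)
    (hN : DifferentiableAt ℝ (fun y => norm3 (A y)) x) (h0 : norm3 (A x) ≠ 0) :
    ((norm3 (A x))⁻¹ • A x) ⨯₃ curl3 (fun y => (norm3 (A y))⁻¹ • A y) x
      = godbillonVeyField A x + gvLambda A x • A x - grad3 (fun y => Real.log (norm3 (A y))) x := by
  rw [curl3_inv_smul hN h0 hA, inv_smul_cross_sub h0 (sq_norm3 _).symm, grad3_log hN h0]
  rfl

lemma grad3_log_norm3_cross_sub (hN : DifferentiableAt ℝ (fun y => norm3 (A y)) x)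
    (h0 : norm3 (A x) ≠ 0) :
    grad3 (fun y => Real.log (norm3 (A y))) x ⨯₃ (godbillonVeyField A x + gvLambda A x • A x)
        - gvLambda A x • curl3 A x
      = (curl3 A x ⬝ᵥ grad3 (fun y => norm3 (A y)) x / norm3 (A x) ^ 3) • A x
        - (2 * gvLambda A x) • curl3 A x
        + gvLambda A x • grad3 (fun y => Real.log (norm3 (A y))) x ⨯₃ A x := by
  rw [map_add, map_smul, grad3_log hN h0, godbillonVeyField, inv_smul_cross_inv_sq_smul_cross]
  unfold gvLambda
  module

end GodbillonVeyField

/-- the Reinhart–Wood Godbillon–Vey helicity density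
`η̂·(∇×η̂)`, with `η̂ = Â×(∇×Â)`, differs from `η·(∇×η)`, with `η = (A×B)/|A|²`,
by the pure divergence `∇·R`. -/
theorem reinhart_wood_vs_godbillon_vey
    (A : V3 → V3) (hA : ContDiff ℝ 2 A) (hpos : ∀ x, 0 < norm3 (A x))
    (B Ahat η ηhat R : V3 → V3) (lam : V3 → ℝ)
    (hB : ∀ x, B x = curl3 A x)
    (hAB : ∀ x, dot3 (A x) (B x) = 0)
    (hAhat : ∀ x, Ahat x = (norm3 (A x))⁻¹ • A x)
    (hη : ∀ x, η x = (norm3 (A x) ^ 2)⁻¹ • cross3 (A x) (B x))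
    (hηhat : ∀ x, ηhat x = cross3 (Ahat x) (curl3 Ahat x))
    (hlam : ∀ x, lam x = dot3 (A x) (grad3 (fun y => norm3 (A y)) x) / norm3 (A x) ^ 3)
    (hR : ∀ x, R x =
        (dot3 (B x) (grad3 (fun y => norm3 (A y)) x) / norm3 (A x) ^ 3) • A x
      - (2 * lam x) • B x
      + lam x • cross3 (grad3 (fun y => Real.log (norm3 (A y))) x) (A x)) :
    ∀ x : V3,
      dot3 (ηhat x) (curl3 ηhat x) = dot3 (η x) (curl3 η x) + div3 R x := by
  intro x
  simp only [dot3_eq_dotProduct, cross3_eq_crossProduct] at hAB hη hηhat hlam hR ⊢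
  obtain rfl : B = curl3 A := funext hB
  obtain rfl : Ahat = fun y => (norm3 (A y))⁻¹ • A y := funext hAhat
  obtain rfl : η = godbillonVeyField A := funext hη
  obtain rfl : lam = gvLambda A := funext hlam
  set u := fun y => godbillonVeyField A y + gvLambda A y • A y
  set ℓ := fun y => Real.log (norm3 (A y))
  have hA' (y : V3) : DifferentiableAt ℝ A y := hA.differentiable (by norm_num) y
  have hN (y : V3) : ContDiffAt ℝ 2 (fun z => norm3 (A z)) y :=
    contDiffAt_norm3 hA.contDiffAt (hpos y).ne'
  have hηhat_eq : ηhat = fun y => u y - grad3 ℓ y := funext fun y => by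
    rw [hηhat y, inv_norm3_smul_cross_curl3 (hA' y) ((hN y).differentiableAt (by norm_num))
      (hpos y).ne']
  have hR_eq : R = fun y => grad3 ℓ y ⨯₃ u y - gvLambda A y • curl3 A y := funext fun y => by
    rw [hR y, grad3_log_norm3_cross_sub ((hN y).differentiableAt (by norm_num)) (hpos y).ne']
  have hη' := differentiableAt_godbillonVeyField hA.contDiffAt (hpos x).ne'
  have hlam' := differentiableAt_gvLambda hA.contDiffAt (hpos x).ne'
  have hu : DifferentiableAt ℝ u x := hη'.fun_add (hlam'.fun_smul (hA' x))
  have hℓ : ContDiffAt ℝ 2 ℓ x := (hN x).log (hpos x).ne'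
  calc helicity3 ηhat x
      = helicity3 u x + div3 (fun y => grad3 ℓ y ⨯₃ u y) x := by
        rw [hηhat_eq, helicity3_sub_grad3 hu hℓ]
    _ = helicity3 (godbillonVeyField A) x - div3 (fun y => gvLambda A y • curl3 A y) x
          + div3 (fun y => grad3 ℓ y ⨯₃ u y) x := by
        rw [helicity3_add_smul_of_cross_eq_curl3 hA.contDiffAt hη' hlam'
          fun y => godbillonVeyField_cross_self (hpos y).ne' (hAB y)]
    _ = helicity3 (godbillonVeyField A) x + div3 R x := by
        rw [hR_eq, div3_sub (differentiableAt_crossProduct (differentiableAt_grad3 hℓ) hu)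
          (hlam'.fun_smul (differentiableAt_curl3 hA.contDiffAt))]
        ring
end
end
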